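/- The unique algebra morphism φ: H_R → K[x] satisfying φ ∘ B₊ = ∫₀ ∘ φ, where ∫₀ maps a polynomial to its antiderivative vanishing at 0, sends every rooted forest f to x^{|f|}/f!, where |f| is the number of nodes and f! is the tree factorial. -/

import Mathlib

/-!
Since `φ` is multiplicative, its value on a forest is the product of its values on the trees,
and `|·|`, `(·)!` are additive resp. multiplicative over forests. A tree is `B₊` of the forest
`l` of its children, so `φ (B₊ l) = ∫₀ (x^{|l|} / l!) = x^{|l|+1} / ((|l|+1) l!)`, which is
exactly the recursion defining `|B₊ l|` and `(B₊ l)!`.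
-/

/-- Planar rooted trees. -/
inductive RTree : Type where
  | node : List RTree → RTree

mutual
/-- Number of nodes of a tree. -/
def tsize : RTree → ℕ
  | .node l => 1 + fsize l
/-- Number of nodes of a forest. -/
def fsize : List RTree → ℕ
  | [] => 0
  | t :: ts => tsize t + fsize ts
end

mutual
/-- The tree factorial `t! = Π_{v ∈ V(t)} |t_v|`. -/
def tfact : RTree → ℕ
  | .node l => (1 + fsize l) * ffact l
/-- The tree factorial of a forest (product over its trees). -/
def ffact : List RTree → ℕ
  | [] => 1
  | t :: ts => tfact t * ffact ts
end

open TensorProduct Polynomial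

variable (K : Type) [Field K] [CharZero K]

/-- The algebra of rooted trees: the monoid algebra on the free monoid of
rooted trees (with basis the rooted forests). -/
abbrev HTrees := MonoidAlgebra K (FreeMonoid RTree)

/-- The basis element of `HTrees` corresponding to a forest. -/
noncomputable def forestBasis (f : List RTree) : HTrees K :=
  MonoidAlgebra.single (FreeMonoid.ofList f) 1

/-- The grafting operator `B₊`. -/
noncomputable def Bplus : HTrees K →ₗ[K] HTrees K :=
  MonoidAlgebra.mapDomainLinearMap K K
    (fun f : FreeMonoid RTree => FreeMonoid.of (RTree.node (FreeMonoid.toList f)))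

section

variable {F : Type} [Field F]

lemma forestBasis_nil : forestBasis F [] = 1 := rfl

lemma forestBasis_cons (t : RTree) (ts : List RTree) :
    forestBasis F (t :: ts) = forestBasis F [t] * forestBasis F ts := by
  simp only [forestBasis, MonoidAlgebra.single_mul_single, one_mul]
  rfl

lemma Bplus_forestBasis (l : List RTree) :
    Bplus F (forestBasis F l) = forestBasis F [.node l] :=
  MonoidAlgebra.mapDomainLinearMap_single ..

lemma map_C_mul_X_pow_of_map_X_pow {I : F[X] →ₗ[F] F[X]}
    (hI : ∀ n : ℕ, I (X ^ n) = C (((n : F) + 1)⁻¹) * X ^ (n + 1)) (a : F) (n : ℕ) :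
    I (C a * X ^ n) = C (a * ((n : F) + 1)⁻¹) * X ^ (n + 1) := by
  rw [← smul_eq_C_mul, map_smul, hI, smul_eq_C_mul, ← mul_assoc, ← C_mul]

lemma map_forestBasis_of_forall_mem (φ : HTrees F →ₐ[F] F[X]) (f : List RTree)
    (h : ∀ t ∈ f, φ (forestBasis F [t]) = C ((tfact t : F)⁻¹) * X ^ tsize t) :
    φ (forestBasis F f) = C ((ffact f : F)⁻¹) * X ^ fsize f := by
  induction f with
  | nil => simp [forestBasis_nil, ffact, fsize]
  | cons t ts ih =>
    rw [List.forall_mem_cons] at h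
    rw [forestBasis_cons, map_mul, h.1, ih h.2, ffact, fsize, Nat.cast_mul, mul_inv, C_mul,
      pow_add]
    ring

theorem map_forestBasis_singleton {I : F[X] →ₗ[F] F[X]}
    (hI : ∀ n : ℕ, I (X ^ n) = C (((n : F) + 1)⁻¹) * X ^ (n + 1))
    {φ : HTrees F →ₐ[F] F[X]} (hφ : ∀ h : HTrees F, φ (Bplus F h) = I (φ h)) :
    ∀ t : RTree, φ (forestBasis F [t]) = C ((tfact t : F)⁻¹) * X ^ tsize t
  | .node l => by
    rw [← Bplus_forestBasis, hφ,
      map_forestBasis_of_forall_mem φ l fun t _ => map_forestBasis_singleton hI hφ t,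
      map_C_mul_X_pow_of_map_X_pow hI, tfact, tsize, add_comm 1, Nat.cast_mul,
      Nat.cast_add_one, mul_inv, mul_comm ((ffact l : F)⁻¹)]

end

/-- the unique algebra morphism `φ : H_R → K[x]` satisfying
`φ ∘ B₊ = ∫₀ ∘ φ`, where `∫₀` is the antiderivative vanishing at `0`
(the linear map with `∫₀ xⁿ = xⁿ⁺¹/(n+1)`), sends every rooted forest `f` to
`x^{|f|}/f!`. -/
theorem tree_feynman_rule_eq_tree_factorial
    (I : K[X] →ₗ[K] K[X])
    (hI : ∀ n : ℕ, I (X ^ n) = C (((n : K) + 1)⁻¹) * X ^ (n + 1))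
    (φ : HTrees K →ₐ[K] K[X])
    (hφ : ∀ h : HTrees K, φ (Bplus K h) = I (φ h)) :
    ∀ f : List RTree,
      φ (forestBasis K f) = C ((ffact f : K)⁻¹) * X ^ (fsize f) := by
  exact fun f => map_forestBasis_of_forall_mem φ f fun t _ => map_forestBasis_singleton hI hφ t
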